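/- Let A be a smooth vector field on ℝ⁴ with (□ + m²)A_μ = 0, m > 0, F_{μν} := ∂_μ A_ν − ∂_ν A_μ, and A^phys_μ := A_μ + (1/m²) ∂_μ ∂^ν A_ν. Define the energy-momentum tensor 𝒯_{μν} := F_{μρ} F_ν{}^ρ − (1/4) η_{μν} F_{ρσ} F^{ρσ} − m² A^phys_μ A^phys_ν + (m²/2) η_{μν} A^{phys,ρ} A^phys_ρ. Then 𝒯 is conserved: ∂^ν 𝒯_{μν} = 0. -/

import Mathlib

/-- Partial derivative in direction μ of a function on ℝ⁴. -/
noncomputable def pd (μ : Fin 4) (f : (Fin 4 → ℝ) → ℝ) : (Fin 4 → ℝ) → ℝ :=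
  fun x => fderiv ℝ f x (Pi.single μ 1)

/-- Minkowski metric η = diag(1,−1,−1,−1) (its own inverse). -/
def η (μ ν : Fin 4) : ℝ := if μ = ν then (if μ = 0 then 1 else -1) else 0

/-- d'Alembertian □ = η^{μν} ∂_μ ∂_ν = ∂₀² − ∂₁² − ∂₂² − ∂₃². -/
noncomputable def box (f : (Fin 4 → ℝ) → ℝ) : (Fin 4 → ℝ) → ℝ :=
  fun x => ∑ μ : Fin 4, ∑ ν : Fin 4, η μ ν * pd μ (pd ν f) x

/-!
The gradient term in `A^phys` drops out of the field strength, so `F = dA^phys`. Applying `∂_β`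
to the Klein–Gordon equation gives `□(∂·A) = -m² ∂·A`, hence `∂·A^phys = 0` and the Proca
equation `∂^ν F_{μν} = m² A^phys_μ`. For any `B` with `F = dB`, the Bianchi identity gives
`∂^ν T^Maxwell_{μν} = -F_μ^ρ ∂^ν F_{ρν}`, while `∂^ν T^mass_{μν} = m² (B^ρ F_{μρ} - B_μ ∂·B)`;
for `B = A^phys` the two cancel.
-/

open Finset hiding box

section PartialDerivative

variable {f g : (Fin 4 → ℝ) → ℝ} {x : Fin 4 → ℝ}

theorem ContDiff.pd {n k : WithTop ℕ∞} (hf : ContDiff ℝ n f) (hkn : k + 1 ≤ n) (μ : Fin 4) :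
    ContDiff ℝ k (pd μ f) :=
  (ContinuousLinearMap.apply ℝ ℝ (Pi.single μ 1 : Fin 4 → ℝ)).contDiff.comp
    (hf.fderiv_right hkn)

theorem pd_fun_add (μ : Fin 4) (hf : DifferentiableAt ℝ f x) (hg : DifferentiableAt ℝ g x) :
    pd μ (fun y => f y + g y) x = pd μ f x + pd μ g x := by
  simp [pd, fderiv_fun_add hf hg]

theorem pd_fun_sub (μ : Fin 4) (hf : DifferentiableAt ℝ f x) (hg : DifferentiableAt ℝ g x) :
    pd μ (fun y => f y - g y) x = pd μ f x - pd μ g x := by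
  simp [pd, fderiv_fun_sub hf hg]

theorem pd_fun_mul (μ : Fin 4) (hf : DifferentiableAt ℝ f x) (hg : DifferentiableAt ℝ g x) :
    pd μ (fun y => f y * g y) x = pd μ f x * g x + f x * pd μ g x := by
  simp [pd, fderiv_fun_mul hf hg]
  ring

theorem pd_const_mul (μ : Fin 4) (c : ℝ) (hf : DifferentiableAt ℝ f x) :
    pd μ (fun y => c * f y) x = c * pd μ f x := by
  simp [pd, fderiv_const_mul hf]

theorem pd_const (μ : Fin 4) (c : ℝ) (x : Fin 4 → ℝ) : pd μ (fun _ => c) x = 0 := by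
  simp [pd]

theorem pd_fun_sum {ι : Type*} (s : Finset ι) {f : ι → (Fin 4 → ℝ) → ℝ} (μ : Fin 4)
    (hf : ∀ i ∈ s, DifferentiableAt ℝ (f i) x) :
    pd μ (fun y => ∑ i ∈ s, f i y) x = ∑ i ∈ s, pd μ (f i) x := by
  simp [pd, fderiv_fun_sum hf]

theorem pd_comm (hf : ContDiff ℝ 2 f) (μ ν : Fin 4) : pd μ (pd ν f) = pd ν (pd μ f) := by
  funext x
  have hd : DifferentiableAt ℝ (fderiv ℝ f) x :=
    ((hf.fderiv_right (m := 1) le_rfl).differentiable one_ne_zero).differentiableAt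
  have pd_fderiv (ρ : Fin 4) (v : Fin 4 → ℝ) :
      pd ρ (fun y => fderiv ℝ f y v) x = fderiv ℝ (fderiv ℝ f) x (Pi.single ρ 1) v := by
    simp [pd, fderiv_clm_apply hd (differentiableAt_const v)]
  exact (pd_fderiv μ _).trans <|
    ((hf.contDiffAt.isSymmSndFDerivAt (by simp)) _ _).trans (pd_fderiv ν _).symm

end PartialDerivative

theorem η_symm (μ ν : Fin 4) : η μ ν = η ν μ := by
  unfold η; split_ifs <;> simp_all

theorem Fintype.sum_sum_comm_sum_sum {α β γ δ M : Type*} [Fintype α] [Fintype β] [Fintype γ]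
    [Fintype δ] [AddCommMonoid M] (f : α → β → γ → δ → M) :
    ∑ a, ∑ b, ∑ c, ∑ d, f a b c d = ∑ c, ∑ d, ∑ a, ∑ b, f a b c d := by
  simpa only [Fintype.sum_prod_type] using
    Finset.sum_comm (s := (univ : Finset (α × β))) (t := (univ : Finset (γ × δ)))
      (f := fun p q => f p.1 p.2 q.1 q.2)

noncomputable def divergence (B : Fin 4 → (Fin 4 → ℝ) → ℝ) : (Fin 4 → ℝ) → ℝ :=
  fun x => ∑ α : Fin 4, ∑ β : Fin 4, η α β * pd β (B α) x

noncomputable def fieldStrength (B : Fin 4 → (Fin 4 → ℝ) → ℝ) (μ ν : Fin 4) :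
    (Fin 4 → ℝ) → ℝ :=
  fun x => pd μ (B ν) x - pd ν (B μ) x

noncomputable def maxwellTensor (F : Fin 4 → Fin 4 → (Fin 4 → ℝ) → ℝ) (μ ν : Fin 4) :
    (Fin 4 → ℝ) → ℝ :=
  fun x => (∑ ρ : Fin 4, ∑ σ : Fin 4, η ρ σ * F μ ρ x * F ν σ x)
    - (1/4) * η μ ν * (∑ ρ : Fin 4, ∑ σ : Fin 4, ∑ α : Fin 4, ∑ β : Fin 4,
        η ρ α * η σ β * F α β x * F ρ σ x)

noncomputable def massTensor (m : ℝ) (B : Fin 4 → (Fin 4 → ℝ) → ℝ) (μ ν : Fin 4) :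
    (Fin 4 → ℝ) → ℝ :=
  fun x => -m ^ 2 * B μ x * B ν x
    + (m ^ 2 / 2) * η μ ν * (∑ ρ : Fin 4, ∑ σ : Fin 4, η ρ σ * B ρ x * B σ x)

section Divergence

variable {A B : Fin 4 → (Fin 4 → ℝ) → ℝ} {x : Fin 4 → ℝ}

theorem divergence_add (hA : ∀ ν, DifferentiableAt ℝ (A ν) x)
    (hB : ∀ ν, DifferentiableAt ℝ (B ν) x) :
    divergence (fun ν y => A ν y + B ν y) x = divergence A x + divergence B x := by
  simp only [divergence, pd_fun_add _ (hA _) (hB _), mul_add, sum_add_distrib]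

theorem divergence_const_mul (c : ℝ) (hB : ∀ ν, DifferentiableAt ℝ (B ν) x) :
    divergence (fun ν y => c * B ν y) x = c * divergence B x := by
  simp only [divergence, pd_const_mul _ c (hB _), mul_sum, mul_left_comm c]

theorem ContDiff.divergence {n k : WithTop ℕ∞} (hA : ∀ α, ContDiff ℝ n (A α))
    (hkn : k + 1 ≤ n) : ContDiff ℝ k (divergence A) := by
  have := fun α β => (hA α).pd hkn β
  unfold _root_.divergence
  fun_prop

theorem box_eq_divergence_pd (f : (Fin 4 → ℝ) → ℝ) : box f = divergence (fun α => pd α f) := by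
  funext x
  rw [box, divergence, sum_comm]
  simp only [η_symm]

theorem pd_divergence (hA : ∀ α, ContDiff ℝ 2 (A α)) (μ : Fin 4) :
    pd μ (divergence A) = divergence (fun α => pd μ (A α)) := by
  have := fun α β => ((hA α).pd (k := 1) (by norm_num) β).differentiable one_ne_zero
  funext x
  unfold divergence
  simp (disch := first | fun_prop | (intro _ _; fun_prop)) only [pd_fun_sum, pd_const_mul]
  simp only [pd_comm (hA _) μ]

theorem box_divergence (hA : ∀ α, ContDiff ℝ 3 (A α)) :
    box (divergence A) = divergence (fun α => box (A α)) := by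
  have hA1 := fun α β => (hA α).pd (k := 2) (by norm_num) β
  have := fun α β γ => ((hA1 α β).pd (k := 1) (by norm_num) γ).differentiable one_ne_zero
  have hpd2 (μ ν : Fin 4) :
      pd μ (pd ν (divergence A)) = divergence (fun α => pd μ (pd ν (A α))) := by
    rw [pd_divergence (fun α => (hA α).of_le (by norm_num)), pd_divergence (hA1 · ν)]
  funext x
  simp only [box, hpd2]
  unfold box divergence
  simp (disch := first | fun_prop | (intro _ _; fun_prop)) only [pd_fun_sum, pd_const_mul, mul_sum]
  rw [Fintype.sum_sum_comm_sum_sum]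
  simp only [mul_left_comm]

theorem divergence_fieldStrength (hA : ∀ α, ContDiff ℝ 2 (A α)) (μ : Fin 4) :
    divergence (fieldStrength A μ) x = pd μ (divergence A) x - box (A μ) x := by
  have := fun α β => ((hA α).pd (k := 1) (by norm_num) β).differentiable one_ne_zero
  rw [pd_divergence hA, box_eq_divergence_pd]
  unfold divergence fieldStrength
  simp (disch := fun_prop) only [pd_fun_sub, mul_sub, sum_sub_distrib]

theorem fieldStrength_add_const_mul_pd {φ : (Fin 4 → ℝ) → ℝ} (hA : ∀ ν, Differentiable ℝ (A ν))
    (hφ : ContDiff ℝ 2 φ) (c : ℝ) :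
    fieldStrength (fun ν y => A ν y + c * pd ν φ y) = fieldStrength A := by
  have := fun β => (hφ.pd (k := 1) (by norm_num) β).differentiable one_ne_zero
  funext μ ν x
  unfold fieldStrength
  simp (disch := fun_prop) only [pd_fun_add, pd_const_mul]
  rw [pd_comm hφ μ ν]
  ring

end Divergence

noncomputable def procaPotential (m : ℝ) (A : Fin 4 → (Fin 4 → ℝ) → ℝ) (ν : Fin 4) :
    (Fin 4 → ℝ) → ℝ :=
  fun x => A ν x + 1 / m ^ 2 * pd ν (divergence A) x

section ProcaPotential

variable {m : ℝ} {A : Fin 4 → (Fin 4 → ℝ) → ℝ}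

theorem ContDiff.procaPotential {n k : WithTop ℕ∞} (hA : ∀ α, ContDiff ℝ n (A α))
    (hkn : k + 2 ≤ n) (ν : Fin 4) : ContDiff ℝ k (procaPotential m A ν) := by
  have := (hA ν).of_le (le_self_add.trans hkn)
  have := (ContDiff.divergence hA (k := k + 1) (by rwa [add_assoc, one_add_one_eq_two])).pd
    le_rfl ν
  unfold _root_.procaPotential
  fun_prop

theorem fieldStrength_procaPotential (hA : ∀ α, ContDiff ℝ 3 (A α)) :
    fieldStrength (procaPotential m A) = fieldStrength A :=
  fieldStrength_add_const_mul_pd (fun ν => (hA ν).differentiable (by norm_num))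
    (ContDiff.divergence hA (by norm_num)) _

theorem divergence_procaPotential (hm : m ≠ 0) (hA : ∀ α, ContDiff ℝ 3 (A α))
    (hKG : ∀ α y, box (A α) y + m ^ 2 * A α y = 0) (x : Fin 4 → ℝ) :
    divergence (procaPotential m A) x = 0 := by
  have hA1 (ν : Fin 4) : Differentiable ℝ (A ν) := (hA ν).differentiable (by norm_num)
  have := fun ν => ((ContDiff.divergence hA (k := 2) (by norm_num)).pd (k := 1) (by norm_num)
    ν).differentiable one_ne_zero
  have hbox (α : Fin 4) : box (A α) = fun y => -m ^ 2 * A α y :=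
    funext fun y => by linarith [hKG α y]
  unfold procaPotential
  rw [divergence_add (fun ν => hA1 ν x) (by fun_prop),
    divergence_const_mul _ (by fun_prop), ← box_eq_divergence_pd, box_divergence hA]
  simp only [hbox]
  rw [divergence_const_mul _ (fun ν => hA1 ν x)]
  field_simp
  ring

theorem divergence_fieldStrength_procaPotential (hm : m ≠ 0) (hA : ∀ α, ContDiff ℝ 3 (A α))
    (hKG : ∀ α y, box (A α) y + m ^ 2 * A α y = 0) (ν : Fin 4) (x : Fin 4 → ℝ) :
    divergence (fieldStrength (procaPotential m A) ν) x = m ^ 2 * procaPotential m A ν x := by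
  rw [fieldStrength_procaPotential hA,
    divergence_fieldStrength (fun α => (hA α).of_le (by norm_num)), procaPotential]
  field_simp
  linarith [hKG ν x]

end ProcaPotential

section EnergyMomentum

variable {B : Fin 4 → (Fin 4 → ℝ) → ℝ}

theorem pd_fieldStrength (hB : ∀ ν, ContDiff ℝ 2 (B ν)) (α μ ν : Fin 4) (x : Fin 4 → ℝ) :
    pd α (fieldStrength B μ ν) x = pd α (pd μ (B ν)) x - pd α (pd ν (B μ)) x :=
  pd_fun_sub α (((hB ν).pd le_rfl μ).differentiable one_ne_zero x)
    (((hB μ).pd le_rfl ν).differentiable one_ne_zero x)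

/- Since `F = dB` and the second derivatives of `B` commute, the Bianchi identity holds
automatically; the identity is then checked component by component. -/
theorem divergence_maxwellTensor_fieldStrength (hB : ∀ ν, ContDiff ℝ 2 (B ν)) (μ : Fin 4)
    (x : Fin 4 → ℝ) :
    divergence (maxwellTensor (fieldStrength B) μ) x =
      -∑ ρ, ∑ σ, η ρ σ * fieldStrength B μ ρ x * divergence (fieldStrength B σ) x := by
  have hF (μ ν : Fin 4) : Differentiable ℝ (fieldStrength B μ ν) := by
    have := ((hB ν).pd le_rfl μ).differentiable one_ne_zero
    have := ((hB μ).pd le_rfl ν).differentiable one_ne_zero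
    unfold fieldStrength
    fun_prop
  have hsort (α β ν : Fin 4) (_ : β < α) : pd α (pd β (B ν)) x = pd β (pd α (B ν)) x :=
    congrFun (pd_comm (hB ν) α β) x
  unfold divergence maxwellTensor
  simp (disch := first | fun_prop | (intro _ _; fun_prop)) only [pd_fun_sub, pd_fun_sum,
    pd_fun_mul, pd_const, zero_mul, zero_add]
  simp only [pd_fieldStrength hB]
  fin_cases μ <;>
  · simp [Fin.sum_univ_four, η, fieldStrength, hsort]
    ring

theorem divergence_massTensor (m : ℝ) (hB : ∀ ν, Differentiable ℝ (B ν)) (μ : Fin 4)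
    (x : Fin 4 → ℝ) :
    divergence (massTensor m B μ) x =
      m ^ 2 * (∑ ρ, ∑ σ, η ρ σ * B ρ x * fieldStrength B μ σ x - B μ x * divergence B x) := by
  unfold divergence massTensor fieldStrength
  simp (disch := first | fun_prop | (intro _ _; fun_prop)) only [pd_fun_add, pd_fun_sum,
    pd_fun_mul, pd_const, zero_mul, zero_add]
  fin_cases μ <;>
  · simp [Fin.sum_univ_four, η]
    ring

theorem divergence_maxwellTensor_add_massTensor_eq_zero {m : ℝ} (hB : ∀ ν, ContDiff ℝ 2 (B ν))
    {x : Fin 4 → ℝ} (hdiv : divergence B x = 0)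
    (hProca : ∀ ν, divergence (fieldStrength B ν) x = m ^ 2 * B ν x) (μ : Fin 4) :
    divergence (fun ν y => maxwellTensor (fieldStrength B) μ ν y + massTensor m B μ ν y) x = 0 := by
  have hB1 := fun ν => (hB ν).differentiable two_ne_zero
  have hB2 := fun α β => ((hB α).pd le_rfl β).differentiable one_ne_zero
  rw [divergence_add (fun ν => by unfold maxwellTensor fieldStrength; fun_prop)
      (fun ν => by unfold massTensor; fun_prop),
    divergence_maxwellTensor_fieldStrength hB, divergence_massTensor m hB1, hdiv]
  have hswap : ∑ ρ, ∑ σ, η ρ σ * B ρ x * fieldStrength B μ σ x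
      = ∑ ρ, ∑ σ, η ρ σ * fieldStrength B μ ρ x * B σ x := by
    rw [sum_comm]
    exact sum_congr rfl fun _ _ => sum_congr rfl fun _ _ => by rw [η_symm]; ring
  simp only [hProca, hswap, mul_zero, sub_zero, mul_sum, ← sum_neg_distrib, ← sum_add_distrib]
  exact sum_eq_zero fun _ _ => sum_eq_zero fun _ _ => by ring

end EnergyMomentum

/-- for a smooth vector field A with (□ + m²)A_μ = 0, m > 0,
F_{μν} = ∂_μ A_ν − ∂_ν A_μ, A^phys_μ = A_μ + (1/m²)∂_μ ∂^ν A_ν, the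
energy-momentum tensor
𝒯_{μν} = F_{μρ}F_ν{}^ρ − (1/4)η_{μν}F_{ρσ}F^{ρσ}
          − m² A^phys_μ A^phys_ν + (m²/2) η_{μν} A^{phys,ρ} A^phys_ρ
is conserved: ∂^ν 𝒯_{μν} = 0. -/
theorem proca_energy_momentum_conserved
    (m : ℝ) (hm : 0 < m)
    (A : Fin 4 → (Fin 4 → ℝ) → ℝ)
    (hA : ∀ μ, ContDiff ℝ 4 (A μ))
    (hKG : ∀ μ x, box (A μ) x + m ^ 2 * A μ x = 0)
    (F : Fin 4 → Fin 4 → (Fin 4 → ℝ) → ℝ)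
    (hF : ∀ μ ν, F μ ν = fun x => pd μ (A ν) x - pd ν (A μ) x)
    (Aphys : Fin 4 → (Fin 4 → ℝ) → ℝ)
    (hAphys : ∀ μ, Aphys μ = fun x => A μ x
      + (1 / m ^ 2) * pd μ (fun y => ∑ α : Fin 4, ∑ β : Fin 4, η α β * pd β (A α) y) x)
    (𝒯 : Fin 4 → Fin 4 → (Fin 4 → ℝ) → ℝ)
    (h𝒯 : ∀ μ ν, 𝒯 μ ν = fun x =>
      (∑ ρ : Fin 4, ∑ σ : Fin 4, η ρ σ * F μ ρ x * F ν σ x)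
      - (1/4) * η μ ν * (∑ ρ : Fin 4, ∑ σ : Fin 4, ∑ α : Fin 4, ∑ β : Fin 4,
          η ρ α * η σ β * F α β x * F ρ σ x)
      - m ^ 2 * Aphys μ x * Aphys ν x
      + (m ^ 2 / 2) * η μ ν *
          (∑ ρ : Fin 4, ∑ σ : Fin 4, η ρ σ * Aphys ρ x * Aphys σ x)) :
    ∀ μ x, ∑ ν : Fin 4, ∑ α : Fin 4, η ν α * pd α (𝒯 μ ν) x = 0 := by
  intro μ x
  have hA3 (α : Fin 4) : ContDiff ℝ 3 (A α) := (hA α).of_le (by norm_num)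
  have hF_eq : F = fieldStrength (procaPotential m A) := by
    rw [fieldStrength_procaPotential hA3]
    exact funext fun μ => funext (hF μ)
  have h𝒯_split : 𝒯 μ = fun ν y => maxwellTensor F μ ν y + massTensor m Aphys μ ν y := by
    funext ν y
    rw [h𝒯]
    unfold maxwellTensor massTensor
    ring
  change divergence (𝒯 μ) x = 0
  rw [h𝒯_split, hF_eq, show Aphys = procaPotential m A from funext hAphys]
  exact divergence_maxwellTensor_add_massTensor_eq_zero
    (fun ν => ContDiff.procaPotential hA (by norm_num) ν)
    (divergence_procaPotential hm.ne' hA3 hKG x)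
    (fun ν => divergence_fieldStrength_procaPotential hm.ne' hA3 hKG ν x) μ
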